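/- Consider the linearly parameterized error dynamics ṡ = −η s + Y(t)(â − a) with η > 0, and let ψ : ℝᵖ → ℝ be a twice continuously differentiable l-strongly convex function (∇²ψ(·) ⪰ l I globally, l > 0). Consider the natural momentum adaptation law v̂̇ = −γ [∇²ψ(v̂)]⁻¹ Y(t)ᵀ s, â̇ = β 𝒩(t)(v̂ − â), with 𝒩(t) = 1 + μ‖Y(t)‖², γ, β > 0, and μ > γ(1 + l⁻¹)²/(4βη). Then all trajectories (x, v̂, â) remain bounded, s ∈ L² ∩ L∞, s(t) → 0 as t → ∞, and x(t) → x_d(t). -/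

import Mathlib

/-!
The energy `V = s²/2 + γ⁻¹ (d_ψ(a, v̂) + d_ψ(â, v̂))` satisfies
`V̇ = -η s² + 2 s Y (â - v̂) - γ⁻¹ β 𝒩 ⟪∇ψ(â) - ∇ψ(v̂), â - v̂⟫`. Strong convexity bounds the
last inner product below by `l ‖â - v̂‖²`, and Young's inequality, in which the normalization
`𝒩 = 1 + μ ‖Y‖²` absorbs the factor `‖Y‖²`, gives `V̇ ≤ -(η - γ / (β l μ)) s²`; the gain condition
on `μ` makes this rate positive. So `V` stays bounded, which bounds `s`, `v̂ - a` and `â - v̂`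
(a Bregman divergence of an `l`-strongly convex function dominates `l/2 ‖·‖²`), and `∫ s²` is
finite. Then `x`, hence `Y` and `ṡ`, are bounded, and Barbalat's lemma gives `s → 0`.
-/

open MeasureTheory Filter
open scoped RealInnerProductSpace ENNReal

noncomputable section

/-- The signal `g` is square-integrable (`L²`) on `[0, ∞)`. -/
def InL2 {F : Type*} [NormedAddCommGroup F] (g : ℝ → F) : Prop :=
  ∫⁻ t in Set.Ici (0 : ℝ), ENNReal.ofReal (‖g t‖ ^ 2) < ⊤

/-- The signal `g` is bounded (`L∞`) on `[0, ∞)`. -/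
def InLinf {F : Type*} [NormedAddCommGroup F] (g : ℝ → F) : Prop :=
  ∃ C : ℝ, ∀ t : ℝ, 0 ≤ t → ‖g t‖ ≤ C

open Set NNReal Topology

section Signals

variable {F : Type*} [NormedAddCommGroup F]

theorem inL2_of_integrableOn_Ioi {g : ℝ → F}
    (hg : IntegrableOn (fun t => ‖g t‖ ^ 2) (Ioi 0)) : InL2 g := by
  rw [InL2, setLIntegral_congr Ioi_ae_eq_Ici.symm]
  exact (hasFiniteIntegral_iff_ofReal (ae_of_all _ fun t => by positivity)).1 hg.2

theorem inLinf_const (c : F) : InLinf fun _ : ℝ => c :=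
  ⟨‖c‖, fun _ _ => le_rfl⟩

theorem inLinf_of_forall_sq_norm_le {g : ℝ → F} {C : ℝ} (hg : ∀ t, 0 ≤ t → ‖g t‖ ^ 2 ≤ C) :
    InLinf g :=
  ⟨√C, fun t ht => Real.le_sqrt_of_sq_le (hg t ht)⟩

namespace InLinf

variable {f g : ℝ → F}

theorem add (hf : InLinf f) (hg : InLinf g) : InLinf fun t => f t + g t := by
  obtain ⟨C, hC⟩ := hf
  obtain ⟨D, hD⟩ := hg
  exact ⟨C + D, fun t ht => (norm_add_le _ _).trans (add_le_add (hC t ht) (hD t ht))⟩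

theorem sub (hf : InLinf f) (hg : InLinf g) : InLinf fun t => f t - g t := by
  obtain ⟨C, hC⟩ := hf
  obtain ⟨D, hD⟩ := hg
  exact ⟨C + D, fun t ht => (norm_sub_le _ _).trans (add_le_add (hC t ht) (hD t ht))⟩

theorem of_sub (hfg : InLinf fun t => f t - g t) (hg : InLinf g) : InLinf f := by
  simpa using hfg.add hg

theorem const_mul {u : ℝ → ℝ} (hu : InLinf u) (c : ℝ) : InLinf fun t => c * u t := by
  obtain ⟨C, hC⟩ := hu
  exact ⟨|c| * C, fun t ht => by
    rw [norm_mul, Real.norm_eq_abs]; exact mul_le_mul_of_nonneg_left (hC t ht) (abs_nonneg c)⟩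

theorem inner {E : Type*} [NormedAddCommGroup E] [InnerProductSpace ℝ E] {f g : ℝ → E}
    (hf : InLinf f) (hg : InLinf g) : InLinf fun t => ⟪f t, g t⟫ := by
  obtain ⟨C, hC⟩ := hf
  obtain ⟨D, hD⟩ := hg
  refine ⟨C * D, fun t ht => (norm_inner_le_norm _ _).trans ?_⟩
  exact mul_le_mul (hC t ht) (hD t ht) (norm_nonneg _) ((norm_nonneg _).trans (hC t ht))

end InLinf

/-- Barbalat's lemma. -/
theorem tendsto_zero_of_lipschitzOnWith_of_integrableOn_sq {f : ℝ → F} {K : ℝ≥0}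
    (hf : LipschitzOnWith K f (Ici 0)) (hint : IntegrableOn (fun t => ‖f t‖ ^ 2) (Ioi 0)) :
    Tendsto f atTop (𝓝 0) := by
  rw [Metric.tendsto_nhds]
  intro ε hε
  set δ := ε / (2 * (K + 1))
  have hδ : 0 < δ := by positivity
  have hKδ : K * δ ≤ ε / 2 := by
    rw [mul_div_assoc', div_le_div_iff₀ (by positivity) two_pos]
    nlinarith [K.2]
  have hII : ∀ t t', 0 ≤ t → 0 ≤ t' → IntervalIntegrable (fun u => ‖f u‖ ^ 2) volume t t' :=
    fun t t' ht ht' => intervalIntegrable_iff.2 <|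
      hint.mono_set fun u hu => (le_min ht ht').trans_lt hu.1
  have hblock : ∀ t, 0 ≤ t → ε ≤ ‖f t‖ → δ * (ε / 2) ^ 2 ≤ ∫ u in t..t + δ, ‖f u‖ ^ 2 := by
    intro t ht hft
    have hnear : ∀ u ∈ Icc t (t + δ), (ε / 2) ^ 2 ≤ ‖f u‖ ^ 2 := by
      intro u hu
      have hdist : ‖f t - f u‖ ≤ K * δ := by
        rw [← dist_eq_norm]
        refine (hf.dist_le_mul t ht u (ht.trans hu.1)).trans (mul_le_mul_of_nonneg_left ?_ K.2)
        rw [Real.dist_eq, abs_sub_comm, abs_of_nonneg (by linarith [hu.1])]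
        linarith [hu.2]
      have := norm_le_insert' (f t) (f u)
      gcongr
      linarith
    calc δ * (ε / 2) ^ 2 = ∫ _ in t..t + δ, (ε / 2) ^ 2 := by simp
      _ ≤ ∫ u in t..t + δ, ‖f u‖ ^ 2 :=
        intervalIntegral.integral_mono_on (by linarith) intervalIntegrable_const
          (hII t _ ht (by linarith)) hnear
  have htail : Tendsto (fun t => ∫ u in t..t + δ, ‖f u‖ ^ 2) atTop (𝓝 0) := by
    have hlim {b : ℝ → ℝ} (hb : Tendsto b atTop atTop) :=
      intervalIntegral_tendsto_integral_Ioi 0 hint hb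
    have := (hlim (tendsto_atTop_add_const_right _ δ tendsto_id)).sub (hlim tendsto_id)
    simp only [id, sub_self] at this
    refine this.congr' ?_
    filter_upwards [eventually_ge_atTop 0] with t ht
    exact intervalIntegral.integral_interval_sub_left (hII 0 _ le_rfl (by linarith))
      (hII 0 t le_rfl ht)
  filter_upwards [htail.eventually (gt_mem_nhds (by positivity : 0 < δ * (ε / 2) ^ 2)),
    eventually_ge_atTop 0] with t hsmall ht
  rw [dist_zero_right]
  by_contra! hbig
  linarith [hblock t ht hbig]

theorem exists_lipschitzOnWith_of_hasDerivAt_of_inLinf [NormedSpace ℝ F] {f f' : ℝ → F}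
    (hf : ∀ t, 0 ≤ t → HasDerivAt f (f' t) t) (hf' : InLinf f') :
    ∃ K, LipschitzOnWith K f (Ici 0) := by
  obtain ⟨C, hC⟩ := hf'
  refine ⟨Real.toNNReal C, (convex_Ici 0).lipschitzOnWith_of_nnnorm_hasDerivWithin_le
    (fun t ht => (hf t ht).hasDerivWithinAt) fun t ht => ?_⟩
  rw [← NNReal.coe_le_coe, coe_nnnorm]
  exact (hC t ht).trans (Real.le_coe_toNNReal C)

end Signals

theorem integrableOn_Ioi_of_intervalIntegral_le {f : ℝ → ℝ} {a C : ℝ}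
    (hf : ContinuousOn f (Ici a)) (hf₀ : ∀ t, a ≤ t → 0 ≤ f t)
    (hC : ∀ T, a ≤ T → ∫ t in a..T, f t ≤ C) : IntegrableOn f (Ioi a) := by
  refine integrableOn_Ioi_of_intervalIntegral_norm_bounded C a (b := id)
    (fun T => ((hf.mono Icc_subset_Ici_self).integrableOn_Icc).mono_set Ioc_subset_Icc_self)
    tendsto_id ?_
  filter_upwards [eventually_ge_atTop a] with T hT
  rw [intervalIntegral.integral_congr fun t ht => Real.norm_of_nonneg (hf₀ t ?_)]
  · exact hC T hT
  · rw [id, uIcc_of_le hT] at ht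
    exact ht.1

theorem add_intervalIntegral_le_of_hasDerivAt_le_neg {V V' W : ℝ → ℝ} {a b : ℝ} (hab : a ≤ b)
    (hW : ContinuousOn W (Icc a b)) (hV : ∀ t ∈ Icc a b, HasDerivAt V (V' t) t)
    (hV' : ∀ t ∈ Ioo a b, V' t ≤ -W t) :
    V b + ∫ t in a..b, W t ≤ V a := by
  have hprim : ∀ t ∈ Ioo a b, HasDerivAt (fun T => ∫ t in a..T, W t) (W t) t := fun t ht =>
    intervalIntegral.integral_hasDerivAt_right
      ((hW.mono (Icc_subset_Icc_right ht.2.le)).intervalIntegrable_of_Icc ht.1.le)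
      ((hW.mono Ioo_subset_Icc_self).stronglyMeasurableAtFilter isOpen_Ioo t ht)
      (hW.continuousAt (Icc_mem_nhds ht.1 ht.2))
  have hanti : AntitoneOn (fun T => V T + ∫ t in a..T, W t) (Icc a b) := by
    refine antitoneOn_of_hasDerivWithinAt_nonpos (convex_Icc a b) ?_ (f' := fun t => V' t + W t)
      (fun t ht => ?_) fun t ht => ?_
    · refine ContinuousOn.add (fun t ht => (hV t ht).continuousAt.continuousWithinAt) ?_
      rw [← uIcc_of_le hab] at hW ⊢
      exact intervalIntegral.continuousOn_primitive_interval hW.integrableOn_uIcc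
    · rw [interior_Icc] at ht
      exact ((hV t (Ioo_subset_Icc_self ht)).add (hprim t ht)).hasDerivWithinAt
    · rw [interior_Icc] at ht
      linarith [hV' t ht]
  simpa using hanti (left_mem_Icc.2 hab) (right_mem_Icc.2 hab) hab

theorem div_two_le_sub_sub_of_le_deriv2 {g g' g'' : ℝ → ℝ} {m : ℝ}
    (hg : ∀ r, HasDerivAt g (g' r) r) (hg' : ∀ r, HasDerivAt g' (g'' r) r)
    (hm : ∀ r, m ≤ g'' r) :
    m / 2 ≤ g 1 - g 0 - g' 0 := by
  have hslope : Monotone fun r => g' r - m * r :=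
    monotone_of_hasDerivAt_nonneg (fun r => ((hg' r).sub ((hasDerivAt_id r).const_mul m)))
      fun r => by simpa using hm r
  have hmono : MonotoneOn (fun r => g r - g' 0 * r - m / 2 * r ^ 2) (Ici 0) := by
    have hderiv : ∀ r, HasDerivAt (fun r => g r - g' 0 * r - m / 2 * r ^ 2)
        (g' r - g' 0 - m * r) r := fun r => by
      refine (((hg r).sub ((hasDerivAt_id r).const_mul (g' 0))).sub
        ((hasDerivAt_pow 2 r).const_mul (m / 2))).congr_deriv ?_
      simp only [mul_one, Nat.cast_ofNat, Nat.add_one_sub_one, pow_one, sub_right_inj]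
      ring
    refine monotoneOn_of_hasDerivWithinAt_nonneg (convex_Ici 0)
      (fun r _ => (hderiv r).continuousAt.continuousWithinAt)
      (fun r _ => (hderiv r).hasDerivWithinAt) fun r hr => ?_
    rw [interior_Ici] at hr
    have := hslope (le_of_lt hr)
    simp only [mul_zero, sub_zero] at this
    linarith
  have := hmono self_mem_Ici (mem_Ici.2 zero_le_one) zero_le_one
  simp only at this
  linarith

section Bregman

variable {E : Type*} [NormedAddCommGroup E] [InnerProductSpace ℝ E]
  {ψ : E → ℝ} {gradψ : E → E} {hessψ : E → E →L[ℝ] E} {l : ℝ}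

def bregman (ψ : E → ℝ) (gradψ : E → E) (y x : E) : ℝ :=
  ψ y - ψ x - ⟪gradψ x, y - x⟫

theorem bregman_add_bregman (y x : E) :
    bregman ψ gradψ y x + bregman ψ gradψ x y = ⟪gradψ y - gradψ x, y - x⟫ := by
  simp only [bregman, inner_sub_left, inner_sub_right]
  ring

variable [CompleteSpace E]

theorem HasGradientAt.hasDerivAt_comp {f : ℝ → E} {f' : E} {t : ℝ}
    (hψ : HasGradientAt ψ (gradψ (f t)) (f t)) (hf : HasDerivAt f f' t) :
    HasDerivAt (fun t => ψ (f t)) ⟪gradψ (f t), f'⟫ t := by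
  have h := hψ.hasFDerivAt.comp_hasDerivAt t hf
  simp only [InnerProductSpace.toDual_apply_apply] at h
  exact h

theorem half_mul_sq_norm_sub_le_bregman (hgrad : ∀ x, HasGradientAt ψ (gradψ x) x)
    (hhess : ∀ x, HasFDerivAt gradψ (hessψ x) x) (hstrong : ∀ x v, l * ‖v‖ ^ 2 ≤ ⟪v, hessψ x v⟫)
    (y x : E) :
    l / 2 * ‖y - x‖ ^ 2 ≤ bregman ψ gradψ y x := by
  have hline : ∀ r : ℝ, HasDerivAt (fun r : ℝ => x + r • (y - x)) (y - x) r := fun r => by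
    simpa using ((hasDerivAt_id r).smul_const (y - x)).const_add x
  have := div_two_le_sub_sub_of_le_deriv2
    (fun r => (hgrad _).hasDerivAt_comp (hline r))
    (fun r => ((hhess _).comp_hasDerivAt r (hline r)).inner ℝ (hasDerivAt_const r (y - x)))
    (fun r => by simpa [real_inner_comm] using hstrong (x + r • (y - x)) (y - x))
  simp only [zero_smul, add_zero, one_smul, add_sub_cancel] at this
  rw [bregman]
  linarith

theorem mul_sq_norm_sub_le_inner_gradient_sub (hgrad : ∀ x, HasGradientAt ψ (gradψ x) x)
    (hhess : ∀ x, HasFDerivAt gradψ (hessψ x) x) (hstrong : ∀ x v, l * ‖v‖ ^ 2 ≤ ⟪v, hessψ x v⟫)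
    (y x : E) :
    l * ‖y - x‖ ^ 2 ≤ ⟪gradψ y - gradψ x, y - x⟫ := by
  rw [← bregman_add_bregman]
  have := half_mul_sq_norm_sub_le_bregman hgrad hhess hstrong y x
  have := half_mul_sq_norm_sub_le_bregman hgrad hhess hstrong x y
  rw [norm_sub_rev] at this
  linarith

theorem HasDerivAt.bregman {u w : ℝ → E} {u' w' : E} {t : ℝ}
    (hψu : HasGradientAt ψ (gradψ (u t)) (u t)) (hψw : HasGradientAt ψ (gradψ (w t)) (w t))
    (hgradψ : HasFDerivAt gradψ (hessψ (w t)) (w t)) (hu : HasDerivAt u u' t)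
    (hw : HasDerivAt w w' t) :
    HasDerivAt (fun t => _root_.bregman ψ gradψ (u t) (w t))
      (⟪gradψ (u t) - gradψ (w t), u'⟫ - ⟪hessψ (w t) w', u t - w t⟫) t := by
  have := ((hψu.hasDerivAt_comp hu).sub (hψw.hasDerivAt_comp hw)).sub
    ((hgradψ.comp_hasDerivAt t hw).inner ℝ (hu.sub hw))
  refine this.congr_deriv ?_
  simp only [Function.comp, Pi.sub_apply, inner_sub_left, inner_sub_right]
  ring

end Bregman

theorem div_lt_of_normalization_gain_lt {η γ β μ l : ℝ} (hη : 0 < η) (hγ : 0 < γ) (hβ : 0 < β)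
    (hl : 0 < l) (hμ : γ * (1 + l⁻¹) ^ 2 / (4 * β * η) < μ) :
    γ / (β * l * μ) < η := by
  have hμ₀ : 0 < μ := lt_of_le_of_lt (by positivity) hμ
  have hsq : 4 * l⁻¹ ≤ (1 + l⁻¹) ^ 2 := by nlinarith [sq_nonneg (1 - l⁻¹)]
  rw [div_lt_iff₀ (by positivity)] at hμ ⊢
  have : 4 * γ * l⁻¹ < μ * (4 * β * η) := by nlinarith
  rw [← div_eq_mul_inv, div_lt_iff₀ hl] at this
  nlinarith

theorem two_mul_sub_le_of_normalized {S q y r G γ β μ l : ℝ} (hγ : 0 < γ) (hβ : 0 < β)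
    (hμ : 0 < μ) (hl : 0 < l) (hq : |q| ≤ y * r) (hG : l * r ^ 2 ≤ G) :
    2 * S * q - β * (1 + μ * y ^ 2) / γ * G ≤ γ / (β * l * μ) * S ^ 2 := by
  set k := β * (1 + μ * y ^ 2) * l / γ
  have hk : 0 < k := by positivity
  have hyoung : 2 * S * q - k * r ^ 2 ≤ y ^ 2 / k * S ^ 2 := by
    have hSq : S * q ≤ |S| * (y * r) := calc
      S * q ≤ |S| * |q| := by rw [← abs_mul]; exact le_abs_self _
      _ ≤ |S| * (y * r) := mul_le_mul_of_nonneg_left hq (abs_nonneg S)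
    have hsq : y ^ 2 / k * S ^ 2 - (2 * (|S| * (y * r)) - k * r ^ 2)
        = (k * r - |S| * y) ^ 2 / k := by
      rw [← sq_abs S]
      field_simp
      ring
    have : 0 ≤ (k * r - |S| * y) ^ 2 / k := by positivity
    linarith
  have hnorm : y ^ 2 / k ≤ γ / (β * l * μ) := by
    rw [div_le_div_iff₀ hk (by positivity)]
    have : 0 ≤ γ * β * l := by positivity
    simp only [k]
    field_simp
    nlinarith
  have hkG : k * r ^ 2 ≤ β * (1 + μ * y ^ 2) / γ * G := by
    calc k * r ^ 2 = β * (1 + μ * y ^ 2) / γ * (l * r ^ 2) := by simp only [k]; ring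
      _ ≤ β * (1 + μ * y ^ 2) / γ * G := by gcongr
  nlinarith [mul_le_mul_of_nonneg_right hnorm (sq_nonneg S)]

section ClosedLoop

variable {E : Type*} [NormedAddCommGroup E] [InnerProductSpace ℝ E] [CompleteSpace E]
  {ψ : E → ℝ} {gradψ : E → E} {hessψ : E → E →L[ℝ] E} {s : ℝ → ℝ} {Y : ℝ → E} {a : E}
  {ahat vhat : ℝ → E} {η γ β μ l : ℝ}

def momentumLyapunov (ψ : E → ℝ) (gradψ : E → E) (γ : ℝ) (a : E) (s : ℝ) (v â : E) : ℝ :=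
  s ^ 2 / 2 + γ⁻¹ * (bregman ψ gradψ a v + bregman ψ gradψ â v)

theorem le_momentumLyapunov (hgrad : ∀ x, HasGradientAt ψ (gradψ x) x)
    (hhess : ∀ x, HasFDerivAt gradψ (hessψ x) x) (hstrong : ∀ x v, l * ‖v‖ ^ 2 ≤ ⟪v, hessψ x v⟫)
    (hγ : 0 < γ) (a : E) (S : ℝ) (v â : E) :
    S ^ 2 / 2 + l / (2 * γ) * ‖v - a‖ ^ 2 + l / (2 * γ) * ‖â - v‖ ^ 2 ≤
      momentumLyapunov ψ gradψ γ a S v â := calc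
  _ = S ^ 2 / 2 + γ⁻¹ * (l / 2 * ‖a - v‖ ^ 2 + l / 2 * ‖â - v‖ ^ 2) := by
    rw [norm_sub_rev]; ring
  _ ≤ _ := by
    rw [momentumLyapunov]
    gcongr <;> exact half_mul_sq_norm_sub_le_bregman hgrad hhess hstrong _ _

theorem hasDerivAt_momentumLyapunov (hγ : γ ≠ 0) (hgrad : ∀ x, HasGradientAt ψ (gradψ x) x)
    (hhess : ∀ x, HasFDerivAt gradψ (hessψ x) x) {t : ℝ} {dv da : E}
    (hs : HasDerivAt s (-η * s t + ⟪Y t, ahat t - a⟫) t)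
    (hv : HasDerivAt vhat dv t) (hdv : hessψ (vhat t) dv = -((γ * s t) • Y t))
    (ha : HasDerivAt ahat da t) :
    HasDerivAt (fun t => momentumLyapunov ψ gradψ γ a (s t) (vhat t) (ahat t))
      (-η * s t ^ 2 + 2 * s t * ⟪Y t, ahat t - vhat t⟫ +
        γ⁻¹ * ⟪gradψ (ahat t) - gradψ (vhat t), da⟫) t := by
  have hD₁ := (hasDerivAt_const t a).bregman (hgrad _) (hgrad _) (hhess _) hv
  have hD₂ := ha.bregman (hgrad _) (hgrad _) (hhess _) hv
  refine (((hs.pow 2).div_const 2).add ((hD₁.add hD₂).const_mul γ⁻¹)).congr_deriv ?_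
  rw [hdv]
  simp only [inner_zero_right, inner_neg_left, real_inner_smul_left, inner_sub_right]
  field_simp
  ring

theorem momentum_energy_bounds (hη : 0 < η) (hγ : 0 < γ) (hβ : 0 < β) (hl : 0 < l)
    (hμ : γ * (1 + l⁻¹) ^ 2 / (4 * β * η) < μ)
    (hgrad : ∀ x, HasGradientAt ψ (gradψ x) x) (hhess : ∀ x, HasFDerivAt gradψ (hessψ x) x)
    (hstrong : ∀ x v, l * ‖v‖ ^ 2 ≤ ⟪v, hessψ x v⟫)
    (hs : ∀ t, 0 ≤ t → HasDerivAt s (-η * s t + ⟪Y t, ahat t - a⟫) t)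
    (hv : ∀ t, 0 ≤ t → ∃ dv, HasDerivAt vhat dv t ∧ hessψ (vhat t) dv = -((γ * s t) • Y t))
    (ha : ∀ t, 0 ≤ t →
      HasDerivAt ahat ((β * (1 + μ * ‖Y t‖ ^ 2)) • (vhat t - ahat t)) t) :
    InLinf s ∧ InLinf (fun t => vhat t - a) ∧ InLinf (fun t => ahat t - vhat t) ∧
      ∃ C, ∀ T, 0 ≤ T → ∫ t in 0..T, ‖s t‖ ^ 2 ≤ C := by
  have hμ₀ : 0 < μ := lt_of_le_of_lt (by positivity) hμ
  set c := η - γ / (β * l * μ)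
  have hc : 0 < c := sub_pos.2 (div_lt_of_normalization_gain_lt hη hγ hβ hl hμ)
  set V := fun t => momentumLyapunov ψ gradψ γ a (s t) (vhat t) (ahat t)
  have hdecay : ∀ T, 0 ≤ T → V T + ∫ t in 0..T, c * ‖s t‖ ^ 2 ≤ V 0 := by
    intro T hT
    refine add_intervalIntegral_le_of_hasDerivAt_le_neg hT
      (fun t ht => ((hs t ht.1).continuousAt.norm.pow 2).continuousWithinAt.const_mul c)
      (V' := fun t => -η * s t ^ 2 + 2 * s t * ⟪Y t, ahat t - vhat t⟫ + γ⁻¹ *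
        ⟪gradψ (ahat t) - gradψ (vhat t), (β * (1 + μ * ‖Y t‖ ^ 2)) • (vhat t - ahat t)⟫)
      (fun t ht => ?_) (fun t ht => ?_)
    · obtain ⟨dv, hdv, hhdv⟩ := hv t ht.1
      exact hasDerivAt_momentumLyapunov hγ.ne' hgrad hhess (hs t ht.1) hdv hhdv (ha t ht.1)
    · have := two_mul_sub_le_of_normalized (S := s t) hγ hβ hμ₀ hl
        (abs_real_inner_le_norm (Y t) (ahat t - vhat t))
        (mul_sq_norm_sub_le_inner_gradient_sub hgrad hhess hstrong (ahat t) (vhat t))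
      rw [← neg_sub (ahat t), inner_smul_right, inner_neg_right, Real.norm_eq_abs, sq_abs]
      simp only [c]
      linear_combination this
  have hlow := le_momentumLyapunov hgrad hhess hstrong hγ a
  have hV : ∀ T, 0 ≤ T → V T ≤ V 0 ∧ c * ∫ t in 0..T, ‖s t‖ ^ 2 ≤ V 0 := by
    intro T hT
    have hint : 0 ≤ ∫ t in 0..T, ‖s t‖ ^ 2 :=
      intervalIntegral.integral_nonneg hT fun _ _ => by positivity
    have hVT : 0 ≤ V T := le_trans (by positivity) (hlow (s T) (vhat T) (ahat T))
    have := hdecay T hT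
    rw [intervalIntegral.integral_const_mul] at this
    constructor <;> nlinarith
  have hk : 0 < l / (2 * γ) := by positivity
  have hbounds : ∀ t, 0 ≤ t → ‖s t‖ ^ 2 ≤ 2 * V 0 ∧ ‖vhat t - a‖ ^ 2 ≤ V 0 / (l / (2 * γ)) ∧
      ‖ahat t - vhat t‖ ^ 2 ≤ V 0 / (l / (2 * γ)) := by
    intro t ht
    have hVt := (hlow (s t) (vhat t) (ahat t)).trans (hV t ht).1
    have := mul_nonneg hk.le (sq_nonneg ‖vhat t - a‖)
    have := mul_nonneg hk.le (sq_nonneg ‖ahat t - vhat t‖)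
    rw [le_div_iff₀' hk, le_div_iff₀' hk, Real.norm_eq_abs, sq_abs]
    refine ⟨?_, ?_, ?_⟩ <;> nlinarith [sq_nonneg (s t)]
  exact ⟨inLinf_of_forall_sq_norm_le fun t ht => (hbounds t ht).1,
    inLinf_of_forall_sq_norm_le fun t ht => (hbounds t ht).2.1,
    inLinf_of_forall_sq_norm_le fun t ht => (hbounds t ht).2.2,
    V 0 / c, fun T hT => (le_div_iff₀' hc).2 (hV T hT).2⟩

end ClosedLoop

theorem natural_momentum_adaptation_linear_general
    {n p : ℕ}
    (x xd : ℝ → EuclideanSpace ℝ (Fin n))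
    (s : ℝ → ℝ)
    (Y : ℝ → EuclideanSpace ℝ (Fin p))
    (a : EuclideanSpace ℝ (Fin p))
    (ahat vhat : ℝ → EuclideanSpace ℝ (Fin p))
    (ψ : EuclideanSpace ℝ (Fin p) → ℝ)
    (gradψ : EuclideanSpace ℝ (Fin p) → EuclideanSpace ℝ (Fin p))
    (hessψ : EuclideanSpace ℝ (Fin p) →
      (EuclideanSpace ℝ (Fin p) →L[ℝ] EuclideanSpace ℝ (Fin p)))
    (η γ β μ l : ℝ)
    (hη : 0 < η) (hγ : 0 < γ) (hβ : 0 < β) (hl : 0 < l)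
    (hμ : γ * (1 + l⁻¹) ^ 2 / (4 * β * η) < μ)
    -- ψ is twice continuously differentiable with gradient gradψ and Hessian hessψ
    (hgrad : ∀ θ, HasGradientAt ψ (gradψ θ) θ)
    (hhess : ∀ θ, HasFDerivAt gradψ (hessψ θ) θ)
    -- ψ is l-strongly convex: ∇²ψ ⪰ l I globally
    (hstrong : ∀ θ v : EuclideanSpace ℝ (Fin p), l * ‖v‖ ^ 2 ≤ ⟪v, hessψ θ v⟫)
    -- error dynamics ṡ = -η s + Y (â - a)
    (hs : ∀ t, 0 ≤ t → HasDerivAt s (-η * s t + ⟪Y t, ahat t - a⟫) t)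
    -- natural momentum adaptation law v̂̇ = -γ [∇²ψ(v̂)]⁻¹ Yᵀ s
    (hv : ∀ t, 0 ≤ t → ∃ dv : EuclideanSpace ℝ (Fin p),
      HasDerivAt vhat dv t ∧ hessψ (vhat t) dv = -((γ * s t) • Y t))
    -- â̇ = β 𝒩(t)(v̂ - â), 𝒩(t) = 1 + μ‖Y(t)‖²
    (ha : ∀ t, 0 ≤ t →
      HasDerivAt ahat ((β * (1 + μ * ‖Y t‖ ^ 2)) • (vhat t - ahat t)) t)
    -- the regressor Y(x, t) is locally bounded in x uniformly in t
    (hYloc : ∀ R : ℝ, ∃ M : ℝ, ∀ t, 0 ≤ t → ‖x t‖ ≤ R → ‖Y t‖ ≤ M)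
    -- boundedness of s implies boundedness of x
    (hsx : InLinf s → InLinf x)
    -- s → 0 implies x → x_d
    (hxd : Tendsto s atTop (nhds 0) →
      Tendsto (fun t => x t - xd t) atTop (nhds 0)) :
    InLinf x ∧ InLinf vhat ∧ InLinf ahat ∧
    (InL2 s ∧ InLinf s) ∧
    Tendsto s atTop (nhds 0) ∧
    Tendsto (fun t => x t - xd t) atTop (nhds 0) := by
  obtain ⟨hs_inf, hva_inf, hav_inf, C, hC⟩ :=
    momentum_energy_bounds hη hγ hβ hl hμ hgrad hhess hstrong hs hv ha
  have hv_inf : InLinf vhat := hva_inf.of_sub (inLinf_const a)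
  have ha_inf : InLinf ahat := hav_inf.of_sub hv_inf
  have hx_inf : InLinf x := hsx hs_inf
  have hY_inf : InLinf Y := by
    obtain ⟨R, hR⟩ := hx_inf
    obtain ⟨M, hM⟩ := hYloc R
    exact ⟨M, fun t ht => hM t ht (hR t ht)⟩
  have hs_sq : IntegrableOn (fun t => ‖s t‖ ^ 2) (Set.Ioi 0) :=
    integrableOn_Ioi_of_intervalIntegral_le
      (fun t ht => ((hs t ht).continuousAt.norm.pow 2).continuousWithinAt)
      (fun _ _ => by positivity) hC
  obtain ⟨K, hK⟩ := exists_lipschitzOnWith_of_hasDerivAt_of_inLinf hs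
    ((hs_inf.const_mul (-η)).add (hY_inf.inner (ha_inf.sub (inLinf_const a))))
  have hs_lim := tendsto_zero_of_lipschitzOnWith_of_integrableOn_sq hK hs_sq
  exact ⟨hx_inf, hv_inf, ha_inf, ⟨inL2_of_integrableOn_Ioi hs_sq, hs_inf⟩, hs_lim, hxd hs_lim⟩

/-- natural momentum adaptation law for linearly parameterized
dynamics, with an `l`-strongly convex potential `ψ`.  The law
`v̂̇ = -γ [∇²ψ(v̂)]⁻¹ Yᵀ s` is expressed as `∇²ψ(v̂) v̂̇ = -γ s Y`. -/
theorem natural_momentum_adaptation_linear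
    {n p : ℕ}
    (x xd : ℝ → EuclideanSpace ℝ (Fin n))
    (s : ℝ → ℝ)
    (Y : ℝ → EuclideanSpace ℝ (Fin p))
    (a : EuclideanSpace ℝ (Fin p))
    (ahat vhat : ℝ → EuclideanSpace ℝ (Fin p))
    (ψ : EuclideanSpace ℝ (Fin p) → ℝ)
    (gradψ : EuclideanSpace ℝ (Fin p) → EuclideanSpace ℝ (Fin p))
    (hessψ : EuclideanSpace ℝ (Fin p) →
      (EuclideanSpace ℝ (Fin p) →L[ℝ] EuclideanSpace ℝ (Fin p)))
    (η γ β μ l : ℝ)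
    (hη : 0 < η) (hγ : 0 < γ) (hβ : 0 < β) (hl : 0 < l)
    (hμ : γ * (1 + l⁻¹) ^ 2 / (4 * β * η) < μ)
    -- ψ is twice continuously differentiable with gradient gradψ and Hessian hessψ
    (hgrad : ∀ θ, HasGradientAt ψ (gradψ θ) θ)
    (hhess : ∀ θ, HasFDerivAt gradψ (hessψ θ) θ)
    (hhesscont : Continuous hessψ)
    -- ψ is l-strongly convex: ∇²ψ ⪰ l I globally
    (hstrong : ∀ θ v : EuclideanSpace ℝ (Fin p), l * ‖v‖ ^ 2 ≤ ⟪v, hessψ θ v⟫)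
    -- error dynamics ṡ = -η s + Y (â - a)
    (hs : ∀ t, 0 ≤ t → HasDerivAt s (-η * s t + ⟪Y t, ahat t - a⟫) t)
    -- natural momentum adaptation law v̂̇ = -γ [∇²ψ(v̂)]⁻¹ Yᵀ s
    (hv : ∀ t, 0 ≤ t → ∃ dv : EuclideanSpace ℝ (Fin p),
      HasDerivAt vhat dv t ∧ hessψ (vhat t) dv = -((γ * s t) • Y t))
    -- â̇ = β 𝒩(t)(v̂ - â), 𝒩(t) = 1 + μ‖Y(t)‖²
    (ha : ∀ t, 0 ≤ t →
      HasDerivAt ahat ((β * (1 + μ * ‖Y t‖ ^ 2)) • (vhat t - ahat t)) t)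
    -- the regressor Y(x, t) is locally bounded in x uniformly in t
    (hYloc : ∀ R : ℝ, ∃ M : ℝ, ∀ t, 0 ≤ t → ‖x t‖ ≤ R → ‖Y t‖ ≤ M)
    -- boundedness of s implies boundedness of x
    (hsx : InLinf s → InLinf x)
    -- s → 0 implies x → x_d
    (hxd : Tendsto s atTop (nhds 0) →
      Tendsto (fun t => x t - xd t) atTop (nhds 0)) :
    InLinf x ∧ InLinf vhat ∧ InLinf ahat ∧
    (InL2 s ∧ InLinf s) ∧
    Tendsto s atTop (nhds 0) ∧
    Tendsto (fun t => x t - xd t) atTop (nhds 0) :=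
  natural_momentum_adaptation_linear_general x xd s Y a ahat vhat ψ gradψ hessψ η γ β μ l hη hγ hβ
    hl hμ hgrad hhess hstrong hs hv ha hYloc hsx hxd
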